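/- Let N ≥ 2 be an integer, let α ∈ (0, π/2), and suppose sin²α ≤ (1/2)·( 1 + (N−6)/√(N² − 8N + 32) ). Let v = (sin α, cos α) ∈ ℂ². Then for every φ ∈ [−π, π], the one-step target probability satisfies |(A(φ)·v)₀|² ≤ |(A(π)·v)₀|²; that is, the classical Grover phase change φ = π remains optimal as long as the target probability sin²α has not exceeded the threshold P_r(N) = (1/2)·( 1 + (N−6)/√(N² − 8N + 32) ). -/

import Mathlib

open Real Complex Matrix

/-- The generalized Grover iteration matrix with phase `φ` for a database of size `N`. -/
noncomputable def groverA (N : ℕ) (φ : ℝ) : Matrix (Fin 2) (Fin 2) ℂ :=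
  !![Complex.exp (φ * Complex.I) * ((1 - Complex.exp (φ * Complex.I)) / (N : ℂ) - 1),
     ((Real.sqrt ((N : ℝ) - 1) : ℂ) / (N : ℂ)) * (1 - Complex.exp (φ * Complex.I));
     ((Real.sqrt ((N : ℝ) - 1) : ℂ) / (N : ℂ)) * Complex.exp (φ * Complex.I) *
       (1 - Complex.exp (φ * Complex.I)),
     -(1 / (N : ℂ) + (1 - 1 / (N : ℂ)) * Complex.exp (φ * Complex.I))]

/-- The one-step target probability: the squared modulus of the first component of `A(φ)·v`. -/
noncomputable def targetProb (N : ℕ) (φ : ℝ) (v : Fin 2 → ℂ) : ℝ :=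
  ‖(groverA N φ).mulVec v 0‖ ^ 2

/-!
Write `k = √(N-1)`, `m = N - 6` and `v = (sin α, cos α)`. Expanding `e^{iφ}`, one finds
`N² (P(π) - P(φ)) = (1 + cos φ) k (2k cos 2α + m sin 2α + 2 sin 2α (1 + cos φ))`,
so `φ = π` is optimal as soon as `2k cos 2α + m sin 2α ≥ 0`. Since `4k² + m² = N² - 8N + 32`,
the threshold on `sin² α` says exactly that `r cos 2α + m ≥ 0` with `r = √(4k² + m²)`. Writing
`(2k, m) = r (cos β, sin β)` with `|β| < π/2`, for `2α ∈ (0, π)` both conditions say `2α ≤ β + π/2`.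
-/

lemma mul_add_mul_nonneg_of_sqrt_mul_add_nonneg {a m C S : ℝ} (ha : 0 ≤ a)
    (hCS : C ^ 2 + S ^ 2 = 1) (hS : 0 ≤ S) (h : 0 ≤ √(a ^ 2 + m ^ 2) * C + m) :
    0 ≤ a * C + m * S := by
  set r := √(a ^ 2 + m ^ 2)
  have hr : 0 ≤ r := Real.sqrt_nonneg _
  have hr2 : r ^ 2 = a ^ 2 + m ^ 2 := Real.sq_sqrt (by positivity)
  -- In the two nontrivial cases the summands have opposite signs; compare their squares.
  rcases le_or_gt 0 C with hC | hC
  · rcases le_or_gt 0 m with hm | hm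
    · positivity
    · have h1 : m ^ 2 ≤ r ^ 2 * C ^ 2 := by nlinarith [mul_nonneg hr hC]
      have h2 : m ^ 2 * S ^ 2 ≤ (a * C) ^ 2 := by nlinarith
      nlinarith [mul_nonneg ha hC]
  · have hm : 0 ≤ m := by nlinarith [mul_nonneg hr (neg_nonneg.2 hC.le)]
    have h1 : r ^ 2 * C ^ 2 ≤ m ^ 2 := by nlinarith [mul_nonneg hr (neg_nonneg.2 hC.le)]
    have h2 : (a * C) ^ 2 ≤ m ^ 2 * S ^ 2 := by nlinarith
    nlinarith [mul_nonneg hm hS]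

lemma mul_cos_two_mul_add_nonneg_of_sin_sq_le {r m α : ℝ} (hr : 0 < r)
    (h : Real.sin α ^ 2 ≤ 1 / 2 * (1 + m / r)) : 0 ≤ r * Real.cos (2 * α) + m := by
  have hcos : Real.cos (2 * α) = 1 - 2 * Real.sin α ^ 2 := by
    rw [Real.cos_two_mul, Real.cos_sq']; ring
  have hmr : r * (m / r) = m := mul_div_cancel₀ m hr.ne'
  rw [hcos]
  nlinarith

lemma sq_mul_targetProb (N : ℕ) (hN : N ≠ 0) (s c ψ : ℝ) :
    (N : ℝ) ^ 2 * targetProb N ψ ![(s : ℂ), (c : ℂ)] =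
      ((Real.cos ψ + 1 - 2 * Real.cos ψ ^ 2) * s - N * s * Real.cos ψ
        + √((N : ℝ) - 1) * c * (1 - Real.cos ψ)) ^ 2
      + (1 - Real.cos ψ ^ 2) * (s * (1 - 2 * Real.cos ψ) - N * s - √((N : ℝ) - 1) * c) ^ 2 := by
  have hN0 : (N : ℂ) ≠ 0 := Nat.cast_ne_zero.2 hN
  have hexp : Complex.exp (ψ * Complex.I) = Real.cos ψ + Real.sin ψ * Complex.I := by
    rw [Complex.exp_mul_I, ← Complex.ofReal_cos, ← Complex.ofReal_sin]
  have hcomp : (N : ℂ) * (groverA N ψ).mulVec ![(s : ℂ), (c : ℂ)] 0 =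
      ((Real.cos ψ - Real.cos ψ ^ 2 + Real.sin ψ ^ 2) * s - N * s * Real.cos ψ
          + √((N : ℝ) - 1) * c * (1 - Real.cos ψ) : ℝ)
      + (Real.sin ψ * (s * (1 - 2 * Real.cos ψ) - N * s - √((N : ℝ) - 1) * c) : ℝ)
        * Complex.I := by
    simp only [groverA, Matrix.mulVec, dotProduct, Fin.sum_univ_two, Matrix.cons_val',
      Matrix.cons_val_zero, Matrix.cons_val_one, Matrix.empty_val', Matrix.cons_val_fin_one,
      Matrix.of_apply, hexp]
    field_simp
    ring_nf
    simp only [Complex.I_sq]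
    push_cast
    ring
  have hnorm : ‖(N : ℂ) * (groverA N ψ).mulVec ![(s : ℂ), (c : ℂ)] 0‖ ^ 2
      = (N : ℝ) ^ 2 * targetProb N ψ ![(s : ℂ), (c : ℂ)] := by
    rw [norm_mul, mul_pow, Complex.norm_natCast, targetProb]
  rw [← hnorm, hcomp, Complex.sq_norm, Complex.normSq_add_mul_I]
  simp only [mul_pow, Real.sin_sq]
  ring

lemma sq_mul_targetProb_pi_sub (N : ℕ) (hN : 1 ≤ N) (α φ : ℝ) :
    (N : ℝ) ^ 2 * (targetProb N π ![(Real.sin α : ℂ), (Real.cos α : ℂ)]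
        - targetProb N φ ![(Real.sin α : ℂ), (Real.cos α : ℂ)]) =
      (1 + Real.cos φ) * √((N : ℝ) - 1) * (2 * √((N : ℝ) - 1) * Real.cos (2 * α)
        + ((N : ℝ) - 6) * Real.sin (2 * α) + 2 * Real.sin (2 * α) * (1 + Real.cos φ)) := by
  have hk : √((N : ℝ) - 1) ^ 2 = (N : ℝ) - 1 :=
    Real.sq_sqrt (sub_nonneg.2 (by exact_mod_cast hN))
  rw [mul_sub, sq_mul_targetProb N (by omega), sq_mul_targetProb N (by omega), Real.cos_pi,
    Real.cos_two_mul', Real.sin_two_mul]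
  linear_combination 2 * Real.sin α ^ 2 * (1 + Real.cos φ) * hk

theorem targetProb_le_targetProb_pi {N : ℕ} (hN : 1 ≤ N) {α : ℝ}
    (hsin : 0 ≤ Real.sin (2 * α))
    (h : 0 ≤ 2 * √((N : ℝ) - 1) * Real.cos (2 * α) + ((N : ℝ) - 6) * Real.sin (2 * α))
    (φ : ℝ) :
    targetProb N φ ![(Real.sin α : ℂ), (Real.cos α : ℂ)]
      ≤ targetProb N π ![(Real.sin α : ℂ), (Real.cos α : ℂ)] := by
  have hφ : 0 ≤ 1 + Real.cos φ := by linarith [Real.neg_one_le_cos φ]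
  have hdiff : 0 ≤ (N : ℝ) ^ 2 * (targetProb N π ![(Real.sin α : ℂ), (Real.cos α : ℂ)]
      - targetProb N φ ![(Real.sin α : ℂ), (Real.cos α : ℂ)]) := by
    rw [sq_mul_targetProb_pi_sub N hN α φ]
    exact mul_nonneg (mul_nonneg hφ (Real.sqrt_nonneg _))
      (add_nonneg h (mul_nonneg (mul_nonneg zero_le_two hsin) hφ))
  exact sub_nonneg.1 (nonneg_of_mul_nonneg_right hdiff (by positivity))

theorem stmt_16 (N : ℕ) (hN : 2 ≤ N) (α : ℝ) (hα : α ∈ Set.Ioo 0 (Real.pi / 2))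
    (hthresh : Real.sin α ^ 2 ≤
      (1 / 2) * (1 + ((N : ℝ) - 6) / Real.sqrt ((N : ℝ) ^ 2 - 8 * N + 32)))
    (v : Fin 2 → ℂ) (hv : v = ![(Real.sin α : ℂ), (Real.cos α : ℂ)]) :
    ∀ φ ∈ Set.Icc (-Real.pi) Real.pi,
      targetProb N φ v ≤ targetProb N Real.pi v := by
  intro φ _
  subst hv
  have hsin : 0 ≤ Real.sin (2 * α) :=
    Real.sin_nonneg_of_nonneg_of_le_pi (by linarith [hα.1]) (by linarith [hα.2])
  have hN1 : (0 : ℝ) ≤ N - 1 := sub_nonneg.2 (by exact_mod_cast (by omega : 1 ≤ N))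
  have hdisc : (N : ℝ) ^ 2 - 8 * N + 32 = (2 * √((N : ℝ) - 1)) ^ 2 + ((N : ℝ) - 6) ^ 2 := by
    rw [mul_pow, Real.sq_sqrt hN1]
    ring
  have hpos : 0 < (N : ℝ) ^ 2 - 8 * N + 32 := by nlinarith [sq_nonneg ((N : ℝ) - 4)]
  refine targetProb_le_targetProb_pi (by omega) hsin ?_ φ
  refine mul_add_mul_nonneg_of_sqrt_mul_add_nonneg (by positivity)
    (Real.cos_sq_add_sin_sq _) hsin ?_
  rw [← hdisc]
  exact mul_cos_two_mul_add_nonneg_of_sin_sq_le (Real.sqrt_pos.2 hpos) hthresh
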